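/- If τ and τ' are compatible stores and τ decomposes as τ₀ ++ [a := p] ++ τ₁, then the compatible union τ∪τ' decomposes as τ₀' ++ [a := p] ++ τ₁' for some stores τ₀', τ₁' with τ₀ ◁ τ₀' and τ₁ ◁ τ₁'. -/

import Mathlib

abbrev Store (α : Type) := List (ℕ × α)

def Store.dom {α} (τ : Store α) : List ℕ := τ.map Prod.fst

/-- Each variable occurs at most once. -/
def Store.WF {α} (τ : Store α) : Prop := τ.dom.Nodup

/-- Two stores are compatible if every common variable is bound to the same term. -/
def Store.Compat {α} (τ τ' : Store α) : Prop :=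
  ∀ a p q, (a, p) ∈ τ → (a, q) ∈ τ' → p = q

/-- τ' extends τ : dom(τ) ⊆ dom(τ') and the stores are compatible. -/
def Store.Ext {α} (τ τ' : Store α) : Prop :=
  (∀ a, a ∈ τ.dom → a ∈ τ'.dom) ∧ Store.Compat τ τ'

/-- Compatible union: keep τ and append the bindings of τ' on fresh variables. -/
def Store.union {α} (τ τ' : Store α) : Store α :=
  τ ++ τ'.filter (fun b => decide (b.1 ∉ τ.dom))

/-!
`union τ τ'` keeps `τ = τ₀ ++ [(a, p)] ++ τ₁` as a prefix, so one may take `τ₀' = τ₀` and `τ₁'` the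
rest of the union. The appended bindings of `τ'` are on variables outside `dom τ`, hence compatible
with `τ₁`; well-formedness of `τ` makes `τ₀` and `τ₁` compatible with themselves.
-/

namespace Store

variable {α : Type}

theorem WF.compat_self {τ : Store α} (h : τ.WF) : Compat τ τ := fun _ _ _ hp hq =>
  (Prod.mk.inj (List.inj_on_of_nodup_map h hp hq rfl)).2

theorem WF.sublist {τ σ : Store α} (h : τ.WF) (hs : σ.Sublist τ) : σ.WF :=
  List.Nodup.sublist (hs.map _) h

theorem WF.ext_self {τ : Store α} (h : τ.WF) : Ext τ τ :=
  ⟨fun _ => id, h.compat_self⟩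

theorem Compat.mono_left {τ₀ τ σ : Store α} (h : Compat τ σ) (hs : τ₀ ⊆ τ) : Compat τ₀ σ :=
  fun a p q hp hq => h a p q (hs hp) hq

theorem Compat.append_right {τ σ₁ σ₂ : Store α} (h₁ : Compat τ σ₁) (h₂ : Compat τ σ₂) :
    Compat τ (σ₁ ++ σ₂) := fun a p q hp hq =>
  (List.mem_append.mp hq).elim (h₁ a p q hp) (h₂ a p q hp)

theorem ext_append_right {τ σ : Store α} (h : τ.WF) (hc : Compat τ σ) : Ext τ (τ ++ σ) :=
  ⟨fun _ ha => by simp only [dom, List.map_append, List.mem_append]; exact Or.inl ha,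
    h.compat_self.append_right hc⟩

theorem compat_filter_fresh (τ τ' : Store α) :
    Compat τ (τ'.filter fun b => decide (b.1 ∉ τ.dom)) := fun a p q hp hq => by
  have hfresh : a ∉ τ.dom := by simpa using (List.mem_filter.mp hq).2
  exact absurd (List.mem_map_of_mem (f := Prod.fst) hp) hfresh

end Store

theorem compatible_union_decomposition_general {α : Type} (τ τ' τ₀ τ₁ : Store α)
    (hτ : τ.WF)
    (a : ℕ) (p : α) (hdec : τ = τ₀ ++ [(a, p)] ++ τ₁) :
    ∃ τ₀' τ₁' : Store α,
      Store.union τ τ' = τ₀' ++ [(a, p)] ++ τ₁' ∧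
      Store.Ext τ₀ τ₀' ∧ Store.Ext τ₁ τ₁' := by
  have hwf₀ : τ₀.WF := hτ.sublist (hdec ▸ (List.sublist_append_left _ _).trans
    (List.sublist_append_left _ _))
  have hwf₁ : τ₁.WF := hτ.sublist (hdec ▸ List.sublist_append_right _ _)
  have hτ₁ : τ₁ ⊆ τ := hdec ▸ List.subset_append_right _ _
  refine ⟨τ₀, τ₁ ++ τ'.filter fun b => decide (b.1 ∉ τ.dom), ?_, hwf₀.ext_self,
    Store.ext_append_right hwf₁ ((Store.compat_filter_fresh τ τ').mono_left hτ₁)⟩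
  rw [Store.union, hdec]
  simp

theorem compatible_union_decomposition {α : Type} (τ τ' τ₀ τ₁ : Store α)
    (hτ : τ.WF) (hτ' : τ'.WF) (h : Store.Compat τ τ')
    (a : ℕ) (p : α) (hdec : τ = τ₀ ++ [(a, p)] ++ τ₁) :
    ∃ τ₀' τ₁' : Store α,
      Store.union τ τ' = τ₀' ++ [(a, p)] ++ τ₁' ∧
      Store.Ext τ₀ τ₀' ∧ Store.Ext τ₁ τ₁' :=
  compatible_union_decomposition_general τ τ' τ₀ τ₁ hτ a p hdec
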